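/- arXiv:math/0402456 — 4 statements merged into one kernel-verified Lean document; each statement's English description precedes it below -/
import Mathlib

section
/- Let n ≥ 2 be an integer and ν > 0. Then for every z ∈ ℝ, ∫_{z²}^∞ (u - z²)^{(n-3)/2} (ν + u)^{-(n+ν)/2} du = (ν + z²)^{-(ν+1)/2} · Γ((n-1)/2)·Γ((ν+1)/2)/Γ((n+ν)/2). -/
/-!
With `a = (n - 1) / 2` and `b = (ν + 1) / 2`, the substitution
`u = z² + (ν + z²) x / (1 - x)` maps `(0, 1)` onto `(z², ∞)`. Since
`ν + u = (ν + z²) / (1 - x)`, it turns the integrand times the Jacobian into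
`(ν + z²)^(-b) x^(a-1) (1 - x)^(b-1)`, whose integral is `(ν + z²)^(-b) B(a, b)`.
-/

open MeasureTheory Set Real ProbabilityTheory

theorem integral_Ioo_rpow_mul_one_sub_rpow {a b : ℝ} (ha : 0 < a) (hb : 0 < b) :
    ∫ x in Ioo (0 : ℝ) 1, x ^ (a - 1) * (1 - x) ^ (b - 1) = beta a b := by
  have hcast : Complex.betaIntegral a b =
      ((∫ x in Ioo (0 : ℝ) 1, x ^ (a - 1) * (1 - x) ^ (b - 1) : ℝ) : ℂ) := by
    rw [Complex.betaIntegral, intervalIntegral.integral_of_le zero_le_one,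
      integral_Ioc_eq_integral_Ioo]
    refine (setIntegral_congr_fun measurableSet_Ioo fun x ⟨hx0, hx1⟩ => ?_).trans
      integral_ofReal
    change (x : ℂ) ^ ((a : ℂ) - 1) * (1 - (x : ℂ)) ^ ((b : ℂ) - 1) =
      ((x ^ (a - 1) * (1 - x) ^ (b - 1) : ℝ) : ℂ)
    rw [Complex.ofReal_mul, Complex.ofReal_cpow hx0.le, Complex.ofReal_cpow (sub_nonneg.2 hx1.le)]
    push_cast
    rfl
  rw [beta_eq_betaIntegralReal a b ha hb, hcast, Complex.ofReal_re]

theorem bijOn_add_mul_div_one_sub (d : ℝ) {k : ℝ} (hk : 0 < k) :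
    BijOn (fun x => d + k * x / (1 - x)) (Ioo 0 1) (Ioi d) := by
  refine InvOn.bijOn (f' := fun u => (u - d) / (k + (u - d)))
    ⟨fun x ⟨hx0, hx1⟩ => ?_, fun u hu => ?_⟩ (fun x ⟨hx0, hx1⟩ => ?_) (fun u hu => ?_)
  · have : 0 < 1 - x := sub_pos.2 hx1
    dsimp only
    rw [add_sub_cancel_left, div_eq_iff (by positivity)]
    field_simp
    ring
  · have : 0 < u - d := sub_pos.2 hu
    dsimp only
    rw [one_sub_div (by positivity), add_sub_cancel_right]
    field_simp
    ring
  · have : 0 < 1 - x := sub_pos.2 hx1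
    simp only [mem_Ioi, lt_add_iff_pos_right]
    positivity
  · have : 0 < u - d := sub_pos.2 hu
    exact ⟨by positivity, (div_lt_one (by positivity)).2 (by linarith)⟩

theorem hasDerivAt_add_mul_div_one_sub (d k : ℝ) {x : ℝ} (hx : x ≠ 1) :
    HasDerivAt (fun x => d + k * x / (1 - x)) (k / (1 - x) ^ 2) x := by
  have h1x : 1 - x ≠ 0 := sub_ne_zero.2 hx.symm
  refine (((hasDerivAt_id' x).const_mul k).div ((hasDerivAt_id' x).const_sub 1) h1x
    |>.const_add d).congr_deriv ?_
  field_simp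
  ring

theorem abs_div_sq_mul_rpow_mul_rpow {a b k x : ℝ} (hk : 0 < k) (hx : x ∈ Ioo (0 : ℝ) 1) :
    |k / (1 - x) ^ 2| * ((k * x / (1 - x)) ^ (a - 1) * (k / (1 - x)) ^ (-(a + b))) =
      k ^ (-b) * (x ^ (a - 1) * (1 - x) ^ (b - 1)) := by
  obtain ⟨hx0, hx1⟩ := hx
  have h1x : 0 < 1 - x := sub_pos.2 hx1
  set w := k / (1 - x) with hw
  have hwpos : 0 < w := by positivity
  have hkx : k * x / (1 - x) = x * w := by rw [hw]; ring
  have hw2 : |k / (1 - x) ^ 2| = w ^ (2 : ℝ) / k := by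
    rw [abs_of_pos (by positivity), rpow_two, hw]; field_simp
  have hpow : w ^ (a - 1) * w ^ (-(a + b)) * w ^ (2 : ℝ) = w ^ (1 - b) := by
    rw [← rpow_add hwpos, ← rpow_add hwpos]; ring_nf
  have hw1b : w ^ (1 - b) = k ^ (1 - b) * (1 - x) ^ (b - 1) := by
    rw [hw, div_rpow hk.le h1x.le, div_eq_mul_inv, ← rpow_neg h1x.le, neg_sub]
  have hk1b : k ^ (1 - b) = k * k ^ (-b) := by rw [sub_eq_add_neg, rpow_add hk, rpow_one]
  rw [hw2, hkx, mul_rpow hx0.le hwpos.le]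
  calc w ^ (2 : ℝ) / k * (x ^ (a - 1) * w ^ (a - 1) * w ^ (-(a + b)))
      = x ^ (a - 1) * (w ^ (a - 1) * w ^ (-(a + b)) * w ^ (2 : ℝ)) / k := by ring
    _ = _ := by rw [hpow, hw1b, hk1b]; field_simp

theorem integral_Ioi_sub_rpow_mul_add_rpow {a b c d : ℝ} (ha : 0 < a) (hb : 0 < b)
    (hcd : 0 < c + d) :
    ∫ u in Ioi d, (u - d) ^ (a - 1) * (c + u) ^ (-(a + b)) = (c + d) ^ (-b) * beta a b := by
  have hbij := bijOn_add_mul_div_one_sub d hcd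
  rw [← hbij.image_eq, integral_image_eq_integral_abs_deriv_smul measurableSet_Ioo
      (fun x hx => (hasDerivAt_add_mul_div_one_sub d (c + d) hx.2.ne).hasDerivWithinAt)
      hbij.injOn,
    ← integral_Ioo_rpow_mul_one_sub_rpow ha hb, ← integral_const_mul]
  refine setIntegral_congr_fun measurableSet_Ioo fun x hx => ?_
  have h1x : 1 - x ≠ 0 := sub_ne_zero.2 hx.2.ne'
  have hcu : c + (d + (c + d) * x / (1 - x)) = (c + d) / (1 - x) := by field_simp; ring
  rw [smul_eq_mul, add_sub_cancel_left, hcu, abs_div_sq_mul_rpow_mul_rpow hcd hx]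

theorem student_tail_integral_beta
    (n : ℕ) (hn : 2 ≤ n) (ν : ℝ) (hν : 0 < ν) (z : ℝ) :
    ∫ u in Ioi (z ^ 2),
        (u - z ^ 2) ^ (((n : ℝ) - 3) / 2) * (ν + u) ^ (-(((n : ℝ) + ν) / 2)) =
      (ν + z ^ 2) ^ (-((ν + 1) / 2)) *
        (Real.Gamma (((n : ℝ) - 1) / 2) * Real.Gamma ((ν + 1) / 2) /
          Real.Gamma (((n : ℝ) + ν) / 2)) := by
  have hn' : (2 : ℝ) ≤ n := by exact_mod_cast hn
  have h := integral_Ioi_sub_rpow_mul_add_rpow (a := ((n : ℝ) - 1) / 2) (b := (ν + 1) / 2)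
    (c := ν) (d := z ^ 2) (by linarith) (by linarith) (by positivity)
  rwa [beta, show ((n : ℝ) - 1) / 2 - 1 = ((n : ℝ) - 3) / 2 by ring,
    show ((n : ℝ) - 1) / 2 + (ν + 1) / 2 = ((n : ℝ) + ν) / 2 by ring] at h
end

section
/- Let ν > 0 and s > √ν. Then the univariate Student-t tail probability admits the hypergeometric closed form: (Γ((ν+1)/2)/(Γ(ν/2)·√(νπ))) · ∫_s^∞ (1 + t²/ν)^{-(ν+1)/2} dt = (1/(ν√π)) · (ν/s²)^{ν/2} · (Γ((ν+1)/2)/Γ(ν/2)) · ₂F₁((1+ν)/2, ν/2; 1+ν/2; -ν/s²). -/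
/-!
For `t > √ν` write `1 + t²/ν = (t²/ν)(1 + ν/t²)` and expand `(1 + ν/t²)^(-a)` by the binomial
series; this gives `(1 + t²/ν)^(-a) = ∑ₖ ν^a (a)ₖ (-ν)ᵏ/k! · t^(-2a-2k)`. The series of absolute
values of the termwise integrals over `(s, ∞)` is dominated by the absolutely convergent binomial
series at `-ν/s²`, so the series may be integrated termwise, producing the factors
`1/(2a-1+2k)`. Since `(b)ₖ/(b+1)ₖ = b/(b+k)`, these are exactly the coefficients of
`₂F₁(a, a-½; a+½; -ν/s²)`; the Student-t case is `a = (ν+1)/2`.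
-/

open MeasureTheory Set

/-- The Gauss hypergeometric function `₂F₁(a,b;c;x)`, defined by its power series
`∑ₖ (a)ₖ(b)ₖ/(c)ₖ · xᵏ/k!` (with `(a)ₖ` the Pochhammer symbol). -/
noncomputable def hyp2F1 (a b c x : ℝ) : ℝ :=
  ∑' k : ℕ,
    ((ascPochhammer ℝ k).eval a * (ascPochhammer ℝ k).eval b /
        (ascPochhammer ℝ k).eval c) * x ^ k / (Nat.factorial k)

lemma Ring.choose_add_sub_one_eq_ascPochhammer_div (a : ℝ) (n : ℕ) :
    Ring.choose (a + n - 1) n = (ascPochhammer ℝ n).eval a / n.factorial := by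
  rw [← Ring.multichoose_eq, eq_div_iff (by positivity), mul_comm, ← nsmul_eq_mul,
    Ring.factorial_nsmul_multichoose_eq_ascPochhammer, Polynomial.ascPochhammer_smeval_eq_eval]

theorem hasSum_ascPochhammer_mul_pow_div_factorial (a : ℝ) {x : ℝ} (hx : |x| < 1) :
    HasSum (fun k : ℕ => (ascPochhammer ℝ k).eval a * x ^ k / k.factorial) ((1 - x) ^ (-a)) := by
  have h := (Real.one_div_one_sub_rpow_hasFPowerSeriesOnBall_zero a).hasSum
    (y := x) (by simpa [enorm_eq_nnnorm, ← NNReal.coe_lt_coe] using hx)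
  rw [zero_add, one_div, ← Real.rpow_neg (by linarith [(abs_lt.mp hx).2])] at h
  refine h.congr_fun fun k => ?_
  rw [FormalMultilinearSeries.ofScalars_apply_eq, smul_eq_mul,
    Ring.choose_add_sub_one_eq_ascPochhammer_div]
  ring

lemma ascPochhammer_eval_div_eval_add_one {b : ℝ} (hb : 0 < b) (k : ℕ) :
    (ascPochhammer ℝ k).eval b / (ascPochhammer ℝ k).eval (b + 1) = b / (b + k) := by
  have hshift : b * (ascPochhammer ℝ k).eval (b + 1) = (ascPochhammer ℝ k).eval b * (b + k) := by
    rw [← ascPochhammer_succ_eval, ascPochhammer_succ_left]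
    simp [Polynomial.eval_comp]
  rw [div_eq_div_iff (ascPochhammer_pos k _ (by linarith)).ne' (by positivity)]
  linarith

lemma hyp2F1_add_one_eq_tsum (a : ℝ) {b : ℝ} (hb : 0 < b) (x : ℝ) :
    hyp2F1 a b (b + 1) x
      = b * ∑' k : ℕ, (ascPochhammer ℝ k).eval a * x ^ k / (k.factorial * (b + k)) := by
  rw [hyp2F1, ← tsum_mul_left]
  refine tsum_congr fun k => ?_
  have hratio := ascPochhammer_eval_div_eval_add_one hb k
  calc _ = (ascPochhammer ℝ k).eval a * x ^ k / k.factorial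
          * ((ascPochhammer ℝ k).eval b / (ascPochhammer ℝ k).eval (b + 1)) := by ring
    _ = _ := by rw [hratio]; field_simp

lemma rpow_sub_two_mul_natCast {t : ℝ} (ht : 0 < t) (r : ℝ) (k : ℕ) :
    t ^ (r - 2 * k) = t ^ r / (t ^ 2) ^ k := by
  rw [Real.rpow_sub ht, ← pow_mul, ← Real.rpow_natCast]
  push_cast
  rfl

section StudentTail

variable {ν a : ℝ}

lemma abs_neg_div_sq_lt_one (hν : 0 < ν) {t : ℝ} (ht : √ν < t) : |-ν / t ^ 2| < 1 := by
  have ht0 : 0 < t := (Real.sqrt_nonneg ν).trans_lt ht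
  rw [abs_div, abs_neg, abs_of_pos hν, abs_of_pos (by positivity), div_lt_one (by positivity)]
  exact (Real.sqrt_lt' ht0).mp ht

lemma hasSum_one_add_sq_div_rpow_neg (hν : 0 < ν) {t : ℝ} (ht : √ν < t) :
    HasSum (fun k : ℕ => ν ^ a * ((ascPochhammer ℝ k).eval a * (-ν) ^ k / k.factorial)
        * t ^ (-2 * a - 2 * k)) ((1 + t ^ 2 / ν) ^ (-a)) := by
  have ht0 : 0 < t := (Real.sqrt_nonneg ν).trans_lt ht
  have hfactor : (1 + t ^ 2 / ν) ^ (-a) = ν ^ a * t ^ (-2 * a) * (1 - -ν / t ^ 2) ^ (-a) := by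
    rw [show 1 + t ^ 2 / ν = t ^ 2 / ν * (1 - -ν / t ^ 2) by field_simp; ring,
      Real.mul_rpow (by positivity) (by rw [neg_div, sub_neg_eq_add]; positivity),
      Real.div_rpow (by positivity) hν.le, ← Real.rpow_natCast, ← Real.rpow_mul ht0.le,
      Real.rpow_neg hν.le]
    push_cast
    field_simp
  rw [hfactor]
  refine ((hasSum_ascPochhammer_mul_pow_div_factorial a (abs_neg_div_sq_lt_one hν ht)).mul_left
    (ν ^ a * t ^ (-2 * a))).congr_fun fun k => ?_
  rw [rpow_sub_two_mul_natCast ht0, div_pow]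
  ring

lemma integral_Ioi_rpow_neg_two_mul (ha : 1 / 2 < a) {s : ℝ} (hs : 0 < s) (k : ℕ) :
    ∫ t in Ioi s, t ^ (-2 * a - 2 * k) = s ^ (1 - 2 * a) / (s ^ 2) ^ k / (2 * a - 1 + 2 * k) := by
  rw [integral_Ioi_rpow_of_lt (by linarith [(Nat.cast_nonneg k : (0:ℝ) ≤ k)]) hs,
    show -2 * a - 2 * k + 1 = (1 - 2 * a) - 2 * k by ring, rpow_sub_two_mul_natCast hs]
  rw [neg_div, ← div_neg]
  congr 1
  ring

theorem integral_Ioi_one_add_sq_div_rpow_neg_eq_tsum (hν : 0 < ν) (ha : 1 / 2 < a) {s : ℝ}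
    (hs : √ν < s) :
    ∫ t in Ioi s, (1 + t ^ 2 / ν) ^ (-a) = ν ^ a * s ^ (1 - 2 * a) *
      ∑' k : ℕ, (ascPochhammer ℝ k).eval a * (-ν / s ^ 2) ^ k
        / (k.factorial * (2 * a - 1 + 2 * k)) := by
  have hs0 : 0 < s := (Real.sqrt_nonneg ν).trans_lt hs
  set c : ℕ → ℝ := fun k => ν ^ a * ((ascPochhammer ℝ k).eval a * (-ν) ^ k / k.factorial)
  set u : ℕ → ℝ := fun k =>
    (ascPochhammer ℝ k).eval a * (-ν / s ^ 2) ^ k / (k.factorial * (2 * a - 1 + 2 * k))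
  have hpos : ∀ k : ℕ, 0 < 2 * a - 1 + 2 * k := fun k => by
    linarith [(Nat.cast_nonneg k : (0 : ℝ) ≤ k)]
  have hint : ∀ k : ℕ, IntegrableOn (fun t => c k * t ^ (-2 * a - 2 * k)) (Ioi s) := fun k =>
    (integrableOn_Ioi_rpow_of_lt (by linarith [hpos k]) hs0).const_mul _
  have hterm : ∀ k : ℕ,
      ∫ t in Ioi s, c k * t ^ (-2 * a - 2 * k) = ν ^ a * s ^ (1 - 2 * a) * u k := by
    intro k
    rw [integral_const_mul, integral_Ioi_rpow_neg_two_mul ha hs0]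
    simp only [c, u, div_pow]
    have hk := hpos k
    field_simp
  have hnorm : ∀ k : ℕ,
      ∫ t in Ioi s, ‖c k * t ^ (-2 * a - 2 * k)‖ = |ν ^ a * s ^ (1 - 2 * a) * u k| := by
    intro k
    rw [← hterm, integral_const_mul, abs_mul, abs_of_nonneg (setIntegral_nonneg measurableSet_Ioi
      fun t ht => Real.rpow_nonneg (hs0.trans ht).le _), ← integral_const_mul]
    refine setIntegral_congr_fun measurableSet_Ioi fun t ht => ?_
    rw [norm_mul, Real.norm_eq_abs, Real.norm_of_nonneg (Real.rpow_nonneg (hs0.trans ht).le _)]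
  have hu : Summable fun k => |u k| := by
    refine Summable.of_nonneg_of_le (fun k => abs_nonneg _) (fun k => ?_)
      ((hasSum_ascPochhammer_mul_pow_div_factorial a
        (abs_neg_div_sq_lt_one hν hs)).summable.abs.div_const (2 * a - 1))
    rw [show u k = (ascPochhammer ℝ k).eval a * (-ν / s ^ 2) ^ k / k.factorial
      / (2 * a - 1 + 2 * k) from div_mul_eq_div_div .., abs_div, abs_of_pos (hpos k)]
    exact div_le_div_of_nonneg_left (abs_nonneg _) (by linarith) (by linarith [hpos k])
  have hsum := hasSum_integral_of_summable_integral_norm hint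
    (by simpa only [hnorm, abs_mul] using hu.mul_left |ν ^ a * s ^ (1 - 2 * a)|)
  rw [setIntegral_congr_fun measurableSet_Ioi
    fun t ht => (hasSum_one_add_sq_div_rpow_neg hν (hs.trans ht)).tsum_eq.symm,
    ← hsum.tsum_eq, tsum_congr hterm, tsum_mul_left]

theorem integral_Ioi_one_add_sq_div_rpow_neg (hν : 0 < ν) (ha : 1 / 2 < a) {s : ℝ}
    (hs : √ν < s) :
    ∫ t in Ioi s, (1 + t ^ 2 / ν) ^ (-a) =
      ν ^ a * s ^ (1 - 2 * a) / (2 * a - 1) * hyp2F1 a (a - 1 / 2) (a + 1 / 2) (-ν / s ^ 2) := by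
  have hb : 0 < a - 1 / 2 := by linarith
  rw [integral_Ioi_one_add_sq_div_rpow_neg_eq_tsum hν ha hs,
    show a + 1 / 2 = a - 1 / 2 + 1 by ring,
    hyp2F1_add_one_eq_tsum a hb, ← tsum_mul_left, ← tsum_mul_left, ← tsum_mul_left]
  refine tsum_congr fun k => ?_
  have h2a : 2 * a - 1 ≠ 0 := by linarith
  field_simp

end StudentTail

theorem student_tail_hypergeometric
    (ν s : ℝ) (hν : 0 < ν) (hs : Real.sqrt ν < s) :
    (Real.Gamma ((ν + 1) / 2) / (Real.Gamma (ν / 2) * Real.sqrt (ν * Real.pi))) *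
        ∫ t in Ioi s, (1 + t ^ 2 / ν) ^ (-((ν + 1) / 2)) =
      (1 / (ν * Real.sqrt Real.pi)) * (ν / s ^ 2) ^ (ν / 2) *
        (Real.Gamma ((ν + 1) / 2) / Real.Gamma (ν / 2)) *
        hyp2F1 ((1 + ν) / 2) (ν / 2) (1 + ν / 2) (-ν / s ^ 2) := by
  have hs0 : 0 < s := (Real.sqrt_nonneg ν).trans_lt hs
  have htail := integral_Ioi_one_add_sq_div_rpow_neg (a := (ν + 1) / 2) hν (by linarith) hs
  rw [show (ν + 1) / 2 - 1 / 2 = ν / 2 by ring, show (ν + 1) / 2 + 1 / 2 = 1 + ν / 2 by ring,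
    show 1 - 2 * ((ν + 1) / 2) = -ν by ring, show 2 * ((ν + 1) / 2) - 1 = ν by ring] at htail
  have hνpow : ν ^ ((ν + 1) / 2) = ν ^ (ν / 2) * √ν := by
    rw [Real.sqrt_eq_rpow, ← Real.rpow_add hν]
    ring_nf
  have hratio : (ν / s ^ 2) ^ (ν / 2) = ν ^ (ν / 2) * s ^ (-ν) := by
    rw [Real.div_rpow hν.le (sq_nonneg s), ← Real.rpow_natCast, ← Real.rpow_mul hs0.le,
      Real.rpow_neg hs0.le]
    push_cast
    ring_nf
  rw [htail, show (1 + ν) / 2 = (ν + 1) / 2 by ring, hνpow, hratio, Real.sqrt_mul hν.le]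
  field_simp
end

section
/- Let n ≥ 1 be an integer and ν > 1. Then for every q ∈ ℝ, ∫_{q²}^∞ (u - q²)^{(n-1)/2} (1 + u/ν)^{-(n+ν)/2} du = ν^{(n+ν)/2} · (q² + ν)^{-(ν-1)/2} · Γ((ν-1)/2)·Γ((n+1)/2)/Γ((n+ν)/2). -/
/-!
The affine substitution `u = q² + (q² + ν) s` turns the integral into a multiple of
`∫₀^∞ s^(a-1) (1 + s)^(-(a+b)) ds` with `a = (n+1)/2`, `b = (ν-1)/2`, and the further
substitution `x = s / (1 + s)` turns that into Euler's Beta integral `∫₀¹ x^(a-1) (1-x)^(b-1) dx`.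
-/

open MeasureTheory Set

theorem MeasureTheory.integral_Ioi_comp_sub_right {E : Type*} [NormedAddCommGroup E]
    [NormedSpace ℝ E] (g : ℝ → E) (c : ℝ) :
    ∫ u in Ioi c, g (u - c) = ∫ t in Ioi 0, g t := by
  have := integral_image_eq_integral_abs_deriv_smul (measurableSet_Ioi (a := 0))
    (fun x _ => ((hasDerivAt_id x).add_const c).hasDerivWithinAt) (add_left_injective c).injOn
    (fun u => g (u - c))
  simpa [image_add_const_Ioi] using this

namespace Real

theorem integral_rpow_mul_one_sub_rpow {a b : ℝ} (ha : 0 < a) (hb : 0 < b) :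
    ∫ x in (0 : ℝ)..1, x ^ (a - 1) * (1 - x) ^ (b - 1) = Gamma a * Gamma b / Gamma (a + b) := by
  have h := Complex.betaIntegral_eq_Gamma_mul_div a b (by simpa) (by simpa)
  rw [← Complex.ofReal_add, Complex.Gamma_ofReal, Complex.Gamma_ofReal, Complex.Gamma_ofReal,
    Complex.betaIntegral] at h
  refine Complex.ofReal_injective ?_
  rw [← intervalIntegral.integral_ofReal]
  push_cast
  rw [← h]
  refine intervalIntegral.integral_congr fun x hx => ?_
  rw [uIcc_of_le zero_le_one] at hx
  simp only [Complex.ofReal_cpow hx.1, Complex.ofReal_cpow (sub_nonneg.2 hx.2)]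
  push_cast
  rfl

theorem image_div_one_add_Ioi : (fun s : ℝ => s / (1 + s)) '' Ioi 0 = Ioo 0 1 := by
  ext x
  constructor
  · rintro ⟨s, hs, rfl⟩
    have h1 : (0 : ℝ) < 1 + s := by linarith [mem_Ioi.1 hs]
    exact ⟨div_pos hs h1, (div_lt_one h1).2 (by linarith)⟩
  · rintro ⟨hx0, hx1⟩
    refine ⟨x / (1 - x), div_pos hx0 (by linarith), ?_⟩
    have : 1 - x ≠ 0 := by linarith
    field_simp
    ring

theorem integral_Ioi_rpow_mul_one_add_rpow_neg {a b : ℝ} (ha : 0 < a) (hb : 0 < b) :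
    ∫ s in Ioi (0 : ℝ), s ^ (a - 1) * (1 + s) ^ (-(a + b)) = Gamma a * Gamma b / Gamma (a + b) := by
  have hderiv : ∀ s ∈ Ioi (0 : ℝ),
      HasDerivWithinAt (fun s => s / (1 + s)) ((1 + s) ^ 2)⁻¹ (Ioi 0) s := by
    intro s hs
    have h1 : 1 + s ≠ 0 := by linarith [mem_Ioi.1 hs]
    have := (hasDerivAt_id' s).fun_div ((hasDerivAt_id' s).const_add 1) h1
    rw [one_mul, mul_one, add_sub_cancel_right, one_div] at this
    exact this.hasDerivWithinAt
  have hinj : InjOn (fun s : ℝ => s / (1 + s)) (Ioi 0) := by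
    intro s hs t ht h
    have h1 : 1 + s ≠ 0 := by linarith [mem_Ioi.1 hs]
    have h2 : 1 + t ≠ 0 := by linarith [mem_Ioi.1 ht]
    field_simp at h
    linarith
  rw [← integral_rpow_mul_one_sub_rpow ha hb, intervalIntegral.integral_of_le zero_le_one,
    integral_Ioc_eq_integral_Ioo, ← image_div_one_add_Ioi,
    integral_image_eq_integral_abs_deriv_smul measurableSet_Ioi hderiv hinj]
  refine setIntegral_congr_fun measurableSet_Ioi fun s hs => ?_
  have hs0 : 0 ≤ s := le_of_lt hs
  have h1 : 0 < 1 + s := by linarith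
  have hsub : 1 - s / (1 + s) = (1 + s)⁻¹ := by field_simp; ring
  have hsplit : (1 + s) ^ (-(a + b)) =
      (1 + s) ^ (-2 : ℝ) * (1 + s) ^ (-(a - 1)) * (1 + s) ^ (-(b - 1)) := by
    rw [← rpow_add h1, ← rpow_add h1]
    ring_nf
  rw [smul_eq_mul, hsub, abs_of_pos (by positivity), div_rpow hs0 h1.le, inv_rpow h1.le,
    div_eq_mul_inv, hsplit, rpow_neg h1.le, rpow_neg h1.le, rpow_neg h1.le, rpow_two]
  ring

theorem integral_Ioi_rpow_mul_add_rpow_neg {a b k : ℝ} (ha : 0 < a) (hb : 0 < b) (hk : 0 < k) :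
    ∫ t in Ioi (0 : ℝ), t ^ (a - 1) * (t + k) ^ (-(a + b)) =
      k ^ (-b) * (Gamma a * Gamma b / Gamma (a + b)) := by
  have hscale := integral_comp_mul_left_Ioi' (fun t => t ^ (a - 1) * (t + k) ^ (-(a + b))) 0 hk
  rw [mul_zero] at hscale
  rw [← hscale, ← integral_Ioi_rpow_mul_one_add_rpow_neg ha hb, smul_eq_mul, ← integral_const_mul,
    ← integral_const_mul]
  refine setIntegral_congr_fun measurableSet_Ioi fun s hs => ?_
  have hk_pow : k ^ (-b) = k ^ (1 : ℝ) * k ^ (a - 1) * k ^ (-(a + b)) := by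
    rw [← rpow_add hk, ← rpow_add hk]
    ring_nf
  rw [show k * s + k = k * (1 + s) by ring, mul_rpow hk.le (le_of_lt hs),
    mul_rpow hk.le (by linarith [mem_Ioi.1 hs]), hk_pow, rpow_one]
  ring

theorem integral_Ioi_sub_rpow_mul_add_rpow_neg {a b c d : ℝ} (ha : 0 < a) (hb : 0 < b)
    (hcd : 0 < c + d) :
    ∫ u in Ioi c, (u - c) ^ (a - 1) * (u + d) ^ (-(a + b)) =
      (c + d) ^ (-b) * (Gamma a * Gamma b / Gamma (a + b)) := by
  rw [← integral_Ioi_rpow_mul_add_rpow_neg ha hb hcd,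
    ← integral_Ioi_comp_sub_right (fun t => t ^ (a - 1) * (t + (c + d)) ^ (-(a + b))) c]
  congr 1 with u
  rw [show u - c + (c + d) = u + d by ring]

end Real

theorem student_ES_integral_beta_general
    (n : ℕ) (ν : ℝ) (hν : 1 < ν) (q : ℝ) :
    ∫ u in Ioi (q ^ 2),
        (u - q ^ 2) ^ (((n : ℝ) - 1) / 2) * (1 + u / ν) ^ (-(((n : ℝ) + ν) / 2)) =
      ν ^ (((n : ℝ) + ν) / 2) * (q ^ 2 + ν) ^ (-((ν - 1) / 2)) *
        (Real.Gamma ((ν - 1) / 2) * Real.Gamma (((n : ℝ) + 1) / 2) /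
          Real.Gamma (((n : ℝ) + ν) / 2)) := by
  have hν0 : 0 < ν := by linarith
  have hsum : ((n : ℝ) + 1) / 2 + (ν - 1) / 2 = ((n : ℝ) + ν) / 2 := by ring
  have hintegrand : ∀ u ∈ Ioi (q ^ 2),
      (u - q ^ 2) ^ (((n : ℝ) - 1) / 2) * (1 + u / ν) ^ (-(((n : ℝ) + ν) / 2)) =
        ν ^ (((n : ℝ) + ν) / 2) * ((u - q ^ 2) ^ (((n : ℝ) + 1) / 2 - 1) *
          (u + ν) ^ (-(((n : ℝ) + 1) / 2 + (ν - 1) / 2))) := by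
    intro u hu
    have huν : 0 ≤ u + ν := by nlinarith [mem_Ioi.1 hu, sq_nonneg q]
    rw [hsum, show ((n : ℝ) + 1) / 2 - 1 = ((n : ℝ) - 1) / 2 by ring,
      show 1 + u / ν = (u + ν) / ν by field_simp; ring, Real.div_rpow huν hν0.le,
      Real.rpow_neg hν0.le, div_inv_eq_mul]
    ring
  rw [setIntegral_congr_fun measurableSet_Ioi hintegrand, integral_const_mul,
    Real.integral_Ioi_sub_rpow_mul_add_rpow_neg (by positivity) (by linarith) (by positivity),
    hsum]
  ring

theorem student_ES_integral_beta
    (n : ℕ) (hn : 1 ≤ n) (ν : ℝ) (hν : 1 < ν) (q : ℝ) :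
    ∫ u in Ioi (q ^ 2),
        (u - q ^ 2) ^ (((n : ℝ) - 1) / 2) * (1 + u / ν) ^ (-(((n : ℝ) + ν) / 2)) =
      ν ^ (((n : ℝ) + ν) / 2) * (q ^ 2 + ν) ^ (-((ν - 1) / 2)) *
        (Real.Gamma ((ν - 1) / 2) * Real.Gamma (((n : ℝ) + 1) / 2) /
          Real.Gamma (((n : ℝ) + ν) / 2)) :=
  student_ES_integral_beta_general n ν hν q
end

section
/- Let n ≥ 2, let Σ be a symmetric positive definite real n×n matrix, μ ∈ ℝⁿ, δ ∈ ℝⁿ with δ ≠ 0, θ ∈ ℝ, and let g be a nonnegative measurable function on [0,∞) with f(x) = det(Σ)^{-1/2} g((x-μ)ᵀΣ^{-1}(x-μ)) integrable. Then for every v ∈ ℝ, ∫_{{x : δ·x + θ ≤ -v}} f(x) dx = G[g]((δ·μ + θ + v)/√(δΣδᵀ)). In particular, if q solves G[g](q) = α, then the Value-at-Risk at confidence 1-α of the Delta-Theta approximated profit-and-loss ΔΠ = δ·r + θ, where r has density f, is VaR_α = -δ·μ - θ + q·√(δΣδᵀ). -/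
open MeasureTheory Matrix Set

/-- The half-space tail function `G[g](s)` for an elliptic generator `g` in dimension `n`. -/
noncomputable def Gfun (n : ℕ) (g : ℝ → ℝ) (s : ℝ) : ℝ :=
  (2 * Real.pi ^ (((n : ℝ) - 1) / 2) / Real.Gamma (((n : ℝ) - 1) / 2)) *
    ∫ r in Ioi (0 : ℝ), r ^ ((n : ℝ) - 2) * ∫ z in Iio (-s), g (z ^ 2 + r ^ 2)

/-!
Factor `S = M Mᵀ` with `Mᵀ δ = √(δ ⬝ᵥ S δ) • e₀`: take any square root `S = Bᵀ B` and compose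
with the reflection sending `B δ` to a coordinate axis. The substitution `x = μ + M y` turns the
elliptic density into `g (y ⬝ᵥ y)`, since the Jacobian `|det M| = √(det S)` cancels the
normalisation, and the half-space `δ ⬝ᵥ x ≤ a` into `y₀ ≤ (a - δ ⬝ᵥ μ) / √(δ ⬝ᵥ S δ)`. Integrating
out `y₀` by Fubini and the remaining `n - 1` coordinates in polar coordinates gives `G[g]`.
-/

theorem exists_mem_orthogonalGroup_mulVec_eq {n : Type*} [Fintype n] [DecidableEq n]
    (w : n → ℝ) (i : n) :
    ∃ Q ∈ orthogonalGroup n ℝ, Q *ᵥ w = √(w ⬝ᵥ w) • Pi.single i 1 := by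
  by_cases hw : w = 0
  · exact ⟨1, one_mem _, by simp [hw]⟩
  have hnorm : ‖WithLp.toLp 2 w‖ = √(w ⬝ᵥ w) := by
    rw [EuclideanSpace.norm_eq]; simp [dotProduct, sq]
  have hpos : √(w ⬝ᵥ w) ≠ 0 := by rw [← hnorm]; simpa using hw
  set u : EuclideanSpace ℝ n := (√(w ⬝ᵥ w))⁻¹ • WithLp.toLp 2 w
  set R := Submodule.reflection (ℝ ∙ (u - EuclideanSpace.single i 1))ᗮ
  have hRw : R (WithLp.toLp 2 w) = √(w ⬝ᵥ w) • EuclideanSpace.single i 1 := by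
    have hw' : WithLp.toLp 2 w = √(w ⬝ᵥ w) • u := by simp [u, smul_smul, hpos]
    have hu : ‖u‖ = ‖EuclideanSpace.single i (1 : ℝ)‖ := by
      simp [u, norm_smul, hnorm, abs_of_nonneg (Real.sqrt_nonneg _), hpos]
    rw [hw', map_smul, Submodule.reflection_sub hu]
  set b := (EuclideanSpace.basisFun n ℝ).toBasis
  refine ⟨LinearMap.toMatrix b b R.toLinearEquiv, R.toMatrix_mem_unitaryGroup _ _, ?_⟩
  have hrepr (x : EuclideanSpace ℝ n) : ⇑(b.repr x) = x.ofLp :=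
    funext (EuclideanSpace.basisFun_repr (ι := n) (𝕜 := ℝ) x)
  have := LinearMap.toMatrix_mulVec_repr b b R.toLinearEquiv.toLinearMap (WithLp.toLp 2 w)
  rwa [hrepr, hrepr, LinearEquiv.coe_coe, LinearIsometryEquiv.coe_toLinearEquiv, hRw] at this

open scoped MatrixOrder in
theorem Matrix.PosSemidef.exists_mul_transpose_eq {n : Type*} [Fintype n] [DecidableEq n]
    {S : Matrix n n ℝ} (hS : S.PosSemidef) (δ : n → ℝ) (i : n) :
    ∃ M : Matrix n n ℝ, M * Mᵀ = S ∧ Mᵀ *ᵥ δ = √(δ ⬝ᵥ S *ᵥ δ) • Pi.single i 1 := by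
  obtain ⟨B, rfl⟩ := CStarAlgebra.nonneg_iff_eq_star_mul_self.mp hS.nonneg
  obtain ⟨Q, hQ, hQB⟩ := exists_mem_orthogonalGroup_mulVec_eq (B *ᵥ δ) i
  have hQQ : Qᵀ * Q = 1 := (mem_orthogonalGroup_iff' _ _).mp hQ
  refine ⟨Bᵀ * Qᵀ, ?_, ?_⟩
  · rw [transpose_mul, transpose_transpose, transpose_transpose, Matrix.mul_assoc,
      ← Matrix.mul_assoc Qᵀ, hQQ, Matrix.one_mul]
    rfl
  · rw [transpose_mul, transpose_transpose, transpose_transpose, ← mulVec_mulVec, hQB,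
      star_eq_conjTranspose, conjTranspose_eq_transpose_of_trivial, ← mulVec_mulVec,
      dotProduct_mulVec δ, vecMul_transpose]

section Standardization

variable {n : Type*} [Fintype n] [DecidableEq n] {M S : Matrix n n ℝ}

theorem sq_det_of_mul_transpose_eq (h : M * Mᵀ = S) : M.det ^ 2 = S.det := by
  rw [← h, det_mul, det_transpose, sq]

theorem dotProduct_mulVec_inv_mulVec_of_mul_transpose_eq (h : M * Mᵀ = S) (hM : M.det ≠ 0)
    (y : n → ℝ) : (M *ᵥ y) ⬝ᵥ S⁻¹ *ᵥ (M *ᵥ y) = y ⬝ᵥ y := by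
  have hSM : S⁻¹ *ᵥ (M *ᵥ y) = Mᵀ⁻¹ *ᵥ y := by
    rw [← h, Matrix.mul_inv_rev, mulVec_mulVec, Matrix.mul_assoc, nonsing_inv_mul _ hM.isUnit,
      Matrix.mul_one]
  rw [hSM, dotProduct_comm, dotProduct_mulVec, vecMul_mulVec, ← mulVec_transpose,
    transpose_mul, transpose_nonsing_inv, ← transpose_mul, transpose_transpose,
    nonsing_inv_mul _ hM.isUnit, transpose_one, one_mulVec]

theorem dotProduct_mulVec_of_transpose_mulVec_eq {δ : n → ℝ} {σ : ℝ} {i : n}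
    (h : Mᵀ *ᵥ δ = σ • Pi.single i 1) (y : n → ℝ) : δ ⬝ᵥ M *ᵥ y = σ * y i := by
  rw [dotProduct_mulVec, ← mulVec_transpose, h, smul_dotProduct, single_one_dotProduct,
    smul_eq_mul]

end Standardization

section AffineChange

variable {ι : Type*} [Fintype ι] [DecidableEq ι] {M : Matrix ι ι ℝ}
  {E : Type*} [NormedAddCommGroup E]

theorem measurableEmbedding_add_mulVec (hM : M.det ≠ 0) (b : ι → ℝ) :
    MeasurableEmbedding fun y : ι → ℝ => b + M *ᵥ y :=
  letI := M.invertibleOfIsUnitDet hM.isUnit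
  ((M.toLinearEquiv' this).toContinuousLinearEquiv.toHomeomorph.trans
    (Homeomorph.addLeft b)).measurableEmbedding

theorem map_add_mulVec_volume (hM : M.det ≠ 0) (b : ι → ℝ) :
    Measure.map (fun y => b + M *ᵥ y) volume = ENNReal.ofReal |M.det⁻¹| • volume := by
  have hlin : Measurable (toLin' M) := (toLin' M).continuous_of_finiteDimensional.measurable
  rw [show (fun y => b + M *ᵥ y) = (b + ·) ∘ toLin' M from rfl,
    ← Measure.map_map (measurable_const_add b) hlin,
    Real.map_matrix_volume_pi_eq_smul_volume_pi hM, Measure.map_smul, map_add_left_eq_self]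

theorem integral_comp_add_mulVec [NormedSpace ℝ E] (hM : M.det ≠ 0) (b : ι → ℝ)
    (F : (ι → ℝ) → E) :
    ∫ y, F (b + M *ᵥ y) = |M.det|⁻¹ • ∫ x, F x := by
  rw [← (measurableEmbedding_add_mulVec hM b).integral_map, map_add_mulVec_volume hM,
    integral_smul_measure, ENNReal.toReal_ofReal (abs_nonneg _), abs_inv]

theorem integrable_comp_add_mulVec_iff (hM : M.det ≠ 0) (b : ι → ℝ) {F : (ι → ℝ) → E} :
    Integrable (fun y => F (b + M *ᵥ y)) ↔ Integrable F := by
  rw [← Function.comp_def, ← (measurableEmbedding_add_mulVec hM b).integrable_map_iff,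
    map_add_mulVec_volume hM]
  exact integrable_smul_measure (by simpa using hM) ENNReal.ofReal_ne_top

end AffineChange

theorem integral_comp_dotProduct_self {ι : Type*} [Fintype ι] [Nonempty ι]
    {E : Type*} [NormedAddCommGroup E] [NormedSpace ℝ E] (K : ℝ → E) :
    ∫ u : ι → ℝ, K (u ⬝ᵥ u) =
      (2 * Real.pi ^ ((Fintype.card ι : ℝ) / 2) / Real.Gamma ((Fintype.card ι : ℝ) / 2)) •
        ∫ r in Ioi (0 : ℝ), r ^ ((Fintype.card ι : ℝ) - 1) • K (r ^ 2) := by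
  set d : ℕ := Fintype.card ι
  have hd : (0 : ℝ) < d := Nat.cast_pos.mpr Fintype.card_pos
  have hnorm (x : EuclideanSpace ℝ ι) : x.ofLp ⬝ᵥ x.ofLp = ‖x‖ ^ 2 := by
    rw [EuclideanSpace.norm_eq, Real.sq_sqrt (by positivity)]
    simp [dotProduct, sq]
  have hconst : (d : ℝ) * (√Real.pi ^ d / Real.Gamma (d / 2 + 1)) =
      2 * Real.pi ^ ((d : ℝ) / 2) / Real.Gamma ((d : ℝ) / 2) := by
    rw [Real.Gamma_add_one (by positivity), Real.sqrt_eq_rpow, ← Real.rpow_natCast,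
      ← Real.rpow_mul Real.pi_pos.le]
    have := Real.Gamma_pos_of_pos (half_pos hd)
    field_simp
  have hpow : ∀ r ∈ Ioi (0 : ℝ), r ^ (d - 1) • K (r ^ 2) = r ^ ((d : ℝ) - 1) • K (r ^ 2) := by
    intro r _
    rw [← Real.rpow_natCast, Nat.cast_sub Fintype.card_pos, Nat.cast_one]
  calc ∫ u : ι → ℝ, K (u ⬝ᵥ u)
      = ∫ x : EuclideanSpace ℝ ι, K (‖x‖ ^ 2) := by
        rw [← (EuclideanSpace.volume_preserving_symm_measurableEquiv_toLp ι).integral_comp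
          (MeasurableEquiv.measurableEmbedding _)]
        simp only [MeasurableEquiv.coe_toLp_symm, hnorm]
    _ = _ := by
        rw [integral_fun_norm_addHaar volume (fun r => K (r ^ 2)), finrank_euclideanSpace,
          setIntegral_congr_fun measurableSet_Ioi hpow, measureReal_def,
          EuclideanSpace.volume_ball, ENNReal.ofReal_one, one_pow, one_mul,
          ENNReal.toReal_ofReal (by positivity), ← Nat.cast_smul_eq_nsmul ℝ, smul_smul, hconst]

theorem dotProduct_self_insertNth {m : ℕ} (i : Fin (m + 1)) (z : ℝ) (u : Fin m → ℝ) :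
    Fin.insertNth i z u ⬝ᵥ Fin.insertNth i z u = z ^ 2 + u ⬝ᵥ u := by
  simp [dotProduct, Fin.sum_univ_succAbove _ i, sq]

theorem integral_indicator_halfSpace_eq_Gfun {m : ℕ} (hm : m ≠ 0) (i : Fin (m + 1))
    (g : ℝ → ℝ) (t : ℝ)
    (hint : Integrable ({y : Fin (m + 1) → ℝ | y i ≤ t}.indicator fun y => g (y ⬝ᵥ y))) :
    ∫ y, {y : Fin (m + 1) → ℝ | y i ≤ t}.indicator (fun y => g (y ⬝ᵥ y)) y =
      Gfun (m + 1) g (-t) := by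
  have : Nonempty (Fin m) := Fin.pos_iff_nonempty.mp (Nat.pos_of_ne_zero hm)
  set F := {y : Fin (m + 1) → ℝ | y i ≤ t}.indicator fun y => g (y ⬝ᵥ y)
  set e := MeasurableEquiv.piFinSuccAbove (fun _ : Fin (m + 1) => ℝ) i
  have he : MeasurePreserving e.symm :=
    (volume_preserving_piFinSuccAbove (fun _ : Fin (m + 1) => ℝ) i).symm e
  have hslice (z : ℝ) (u : Fin m → ℝ) :
      F (e.symm (z, u)) = (Iic t).indicator (fun z => g (z ^ 2 + u ⬝ᵥ u)) z := by
    simp [F, e, indicator_apply, MeasurableEquiv.piFinSuccAbove_symm_apply, Fin.insertNthEquiv,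
      dotProduct_self_insertNth]
  have hint' : Integrable (fun p : ℝ × (Fin m → ℝ) => F (e.symm p)) :=
    (he.integrable_comp_emb e.symm.measurableEmbedding).2 hint
  calc ∫ y, F y = ∫ p : ℝ × (Fin m → ℝ), F (e.symm p) :=
        (he.integral_comp e.symm.measurableEmbedding F).symm
    _ = ∫ u : Fin m → ℝ, ∫ z in Iio t, g (z ^ 2 + u ⬝ᵥ u) := by
        rw [Measure.volume_eq_prod, integral_prod_symm _ (by rwa [← Measure.volume_eq_prod])]
        simp only [hslice, integral_indicator measurableSet_Iic, integral_Iic_eq_integral_Iio]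
    _ = Gfun (m + 1) g (-t) := by
        rw [integral_comp_dotProduct_self (fun s => ∫ z in Iio t, g (z ^ 2 + s)), Gfun]
        push_cast
        simp only [Fintype.card_fin, neg_neg, smul_eq_mul, add_sub_cancel_right]
        ring_nf

noncomputable def ellipticDensity {n : Type*} [Fintype n] [DecidableEq n]
    (S : Matrix n n ℝ) (μ : n → ℝ) (g : ℝ → ℝ) (x : n → ℝ) : ℝ :=
  S.det ^ (-(1 : ℝ) / 2) * g ((x - μ) ⬝ᵥ S⁻¹ *ᵥ (x - μ))

theorem integral_ellipticDensity_halfSpace {n : ℕ} (hn : 2 ≤ n) {S : Matrix (Fin n) (Fin n) ℝ}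
    (hS : S.PosDef) (μ : Fin n → ℝ) {δ : Fin n → ℝ} (hδ : δ ≠ 0) (g : ℝ → ℝ)
    (hf : Integrable (ellipticDensity S μ g)) (a : ℝ) :
    ∫ x in {x | δ ⬝ᵥ x ≤ a}, ellipticDensity S μ g x =
      Gfun n g ((δ ⬝ᵥ μ - a) / √(δ ⬝ᵥ S *ᵥ δ)) := by
  obtain ⟨m, rfl⟩ : ∃ m, n = m + 1 := ⟨n - 1, by omega⟩
  set σ := √(δ ⬝ᵥ S *ᵥ δ)
  have hσ : 0 < σ := Real.sqrt_pos.mpr (by simpa using hS.dotProduct_mulVec_pos hδ)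
  obtain ⟨M, hMS, hMδ⟩ := hS.posSemidef.exists_mul_transpose_eq δ 0
  have hdet : M.det ^ 2 = S.det := sq_det_of_mul_transpose_eq hMS
  have hM : M.det ≠ 0 := (pow_ne_zero_iff two_ne_zero).mp (hdet ▸ hS.det_pos.ne')
  set c := S.det ^ (-(1 : ℝ) / 2)
  have hc : c * |M.det| = 1 := by
    rw [← Real.sqrt_sq_eq_abs, hdet, Real.sqrt_eq_rpow, ← Real.rpow_add hS.det_pos]
    norm_num
  set H := {x : Fin (m + 1) → ℝ | δ ⬝ᵥ x ≤ a}
  set T := {y : Fin (m + 1) → ℝ | y 0 ≤ (a - δ ⬝ᵥ μ) / σ}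
  have hH : MeasurableSet H := measurableSet_le (by fun_prop) measurable_const
  have hpoint (y : Fin (m + 1) → ℝ) :
      H.indicator (ellipticDensity S μ g) (μ + M *ᵥ y) =
        c * T.indicator (fun y => g (y ⬝ᵥ y)) y := by
    have hmem : μ + M *ᵥ y ∈ H ↔ y ∈ T := by
      simp only [H, T, mem_ofPred_eq, dotProduct_add,
        dotProduct_mulVec_of_transpose_mulVec_eq hMδ, le_div_iff₀ hσ]
      constructor <;> intro h <;> linarith
    by_cases hy : y ∈ T
    · rw [indicator_of_mem (hmem.mpr hy), indicator_of_mem hy, ellipticDensity,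
        add_sub_cancel_left, dotProduct_mulVec_inv_mulVec_of_mul_transpose_eq hMS hM]
    · rw [indicator_of_notMem (mt hmem.mp hy), indicator_of_notMem hy, mul_zero]
  have hint : Integrable (T.indicator fun y => g (y ⬝ᵥ y)) := by
    have := ((integrable_comp_add_mulVec_iff hM μ).mpr (hf.indicator hH)).congr
      (Filter.Eventually.of_forall hpoint)
    exact (integrable_const_mul_iff (left_ne_zero_of_mul_eq_one hc).isUnit _).mp this
  calc ∫ x in H, ellipticDensity S μ g x
      = |M.det| * ∫ y, H.indicator (ellipticDensity S μ g) (μ + M *ᵥ y) := by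
        rw [← integral_indicator hH, integral_comp_add_mulVec hM, smul_eq_mul,
          mul_inv_cancel_left₀ (abs_ne_zero.mpr hM)]
    _ = ∫ y, T.indicator (fun y => g (y ⬝ᵥ y)) y := by
        simp only [hpoint, integral_const_mul, ← mul_assoc, mul_comm _ c, hc, one_mul]
    _ = Gfun (m + 1) g ((δ ⬝ᵥ μ - a) / σ) := by
        rw [integral_indicator_halfSpace_eq_Gfun (by omega) 0 g _ hint, ← neg_div, neg_sub]

theorem delta_theta_elliptic_VaR_general
    (n : ℕ) (hn : 2 ≤ n)
    (S : Matrix (Fin n) (Fin n) ℝ) (hS : S.PosDef)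
    (μ δ : Fin n → ℝ) (hδ : δ ≠ 0) (θ : ℝ)
    (g : ℝ → ℝ)
    (hf_int : Integrable (fun x : Fin n → ℝ =>
      S.det ^ (-(1 : ℝ) / 2) * g ((x - μ) ⬝ᵥ S⁻¹.mulVec (x - μ)))) :
    (∀ v : ℝ,
      ∫ x in {x : Fin n → ℝ | δ ⬝ᵥ x + θ ≤ -v},
          S.det ^ (-(1 : ℝ) / 2) * g ((x - μ) ⬝ᵥ S⁻¹.mulVec (x - μ)) =
        Gfun n g ((δ ⬝ᵥ μ + θ + v) / Real.sqrt (δ ⬝ᵥ S.mulVec δ))) ∧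
    (∀ α q : ℝ, Gfun n g q = α →
      ∫ x in {x : Fin n → ℝ |
          δ ⬝ᵥ x + θ ≤ -(-(δ ⬝ᵥ μ) - θ + q * Real.sqrt (δ ⬝ᵥ S.mulVec δ))},
        S.det ^ (-(1 : ℝ) / 2) * g ((x - μ) ⬝ᵥ S⁻¹.mulVec (x - μ)) = α) := by
  have hσ : 0 < √(δ ⬝ᵥ S *ᵥ δ) :=
    Real.sqrt_pos.mpr (by simpa using hS.dotProduct_mulVec_pos hδ)
  have tail (v : ℝ) : ∫ x in {x | δ ⬝ᵥ x + θ ≤ -v}, ellipticDensity S μ g x =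
      Gfun n g ((δ ⬝ᵥ μ + θ + v) / √(δ ⬝ᵥ S *ᵥ δ)) := by
    have hH : {x | δ ⬝ᵥ x + θ ≤ -v} = {x | δ ⬝ᵥ x ≤ -v - θ} := by
      ext x; simp only [mem_ofPred_eq, le_sub_iff_add_le]
    rw [hH, integral_ellipticDensity_halfSpace hn hS μ hδ g hf_int]
    congr 2
    ring
  refine ⟨tail, fun α q hq => (tail _).trans ?_⟩
  rw [← hq]
  congr 1
  field_simp
  ring

theorem delta_theta_elliptic_VaR
    (n : ℕ) (hn : 2 ≤ n)
    (S : Matrix (Fin n) (Fin n) ℝ) (hS : S.PosDef)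
    (μ δ : Fin n → ℝ) (hδ : δ ≠ 0) (θ : ℝ)
    (g : ℝ → ℝ) (hg_meas : Measurable g) (hg_nonneg : ∀ s, 0 ≤ s → 0 ≤ g s)
    (hf_int : Integrable (fun x : Fin n → ℝ =>
      S.det ^ (-(1 : ℝ) / 2) * g ((x - μ) ⬝ᵥ S⁻¹.mulVec (x - μ)))) :
    (∀ v : ℝ,
      ∫ x in {x : Fin n → ℝ | δ ⬝ᵥ x + θ ≤ -v},
          S.det ^ (-(1 : ℝ) / 2) * g ((x - μ) ⬝ᵥ S⁻¹.mulVec (x - μ)) =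
        Gfun n g ((δ ⬝ᵥ μ + θ + v) / Real.sqrt (δ ⬝ᵥ S.mulVec δ))) ∧
    (∀ α q : ℝ, Gfun n g q = α →
      ∫ x in {x : Fin n → ℝ |
          δ ⬝ᵥ x + θ ≤ -(-(δ ⬝ᵥ μ) - θ + q * Real.sqrt (δ ⬝ᵥ S.mulVec δ))},
        S.det ^ (-(1 : ℝ) / 2) * g ((x - μ) ⬝ᵥ S⁻¹.mulVec (x - μ)) = α) :=
  delta_theta_elliptic_VaR_general n hn S hS μ δ hδ θ g hf_int
end
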